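/- For every integer t ≥ 2, the identity (g_{2^{t−1}−2})² = g_{2^t−4} holds in R. -/
import Mathlib


open MvPolynomial Finset

noncomputable section

/-- `R2 = (ℤ/2)[w₂, w₃]`, the polynomial ring in two variables over `ℤ/2ℤ`. -/
abbrev R2 : Type := MvPolynomial (Fin 2) (ZMod 2)

/-- The variable `w₂`. -/
def w2 : R2 := X 0

/-- The variable `w₃`. -/
def w3 : R2 := X 1

/-- The polynomials `g_r`: `g₀ = 1`, `g₁ = 0`, `g₂ = w₂`,
`g_{r+3} = w₂ g_{r+1} + w₃ g_r`. -/
def g : ℕ → R2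
  | 0 => 1
  | 1 => 0
  | 2 => w2
  | (r+3) => w2 * g (r+1) + w3 * g r

lemma g_rec (r : ℕ) : g (r+3) = w2 * g (r+1) + w3 * g r := rfl

lemma two_zero : (2 : R2) = 0 := by
  have h := CharP.cast_eq_zero R2 2
  exact_mod_cast h

lemma AB (n : ℕ) : (g (2*n+2) = g (n+1)^2 + w2 * g n ^ 2) ∧ (g (2*n+3) = w3 * g n ^ 2) := by
  induction n using Nat.strong_induction_on with
  | _ n ih =>
    match n with
    | 0 =>
      constructor
      · show g 2 = g 1 ^ 2 + w2 * g 0 ^ 2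
        simp [g]
      · show g 3 = w3 * g 0 ^ 2
        simp [g]
    | 1 =>
      constructor
      · show g 4 = g 2 ^ 2 + w2 * g 1 ^ 2
        show g (1+3) = g 2 ^ 2 + w2 * g 1 ^ 2
        rw [g_rec]; simp [g]; ring
      · show g 5 = w3 * g 1 ^ 2
        show g (2+3) = w3 * g 1 ^ 2
        rw [g_rec]
        show w2 * g (0+3) + w3 * g 2 = w3 * g 1 ^ 2
        rw [g_rec]; simp [g]
        linear_combination (w2*w3) * two_zero
    | (k+2) =>
      obtain ⟨hA1, hB1⟩ := ih (k+1) (by omega)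
      obtain ⟨_, hB0⟩ := ih k (by omega)
      have e1 : 2*(k+2)+2 = (2*k+3)+3 := by ring
      have e2 : 2*(k+2)+3 = (2*k+4)+3 := by ring
      have e3 : 2*(k+1)+2 = 2*k+4 := by ring
      have e4 : 2*(k+1)+3 = 2*k+5 := by ring
      have hgk3 : g (k+3) = w2 * g (k+1) + w3 * g k := g_rec k
      constructor
      · rw [e1, g_rec, show (2*k+3)+1 = 2*(k+1)+2 by ring, hA1,
          show 2*k+3 = 2*k+3 by rfl, hB0, show k+2+1 = k+3 by rfl, hgk3,
          CharTwo.add_sq]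
        ring
      · rw [e2, g_rec, show (2*k+4)+1 = 2*(k+1)+3 by ring, hB1,
          show 2*k+4 = 2*(k+1)+2 by ring, hA1]
        linear_combination (w2 * w3 * g (k+1)^2) * two_zero

lemma gC : ∀ s : ℕ, g (2^(s+2) - 3) = 0 := by
  intro s
  induction s with
  | zero => simp [g]
  | succ k ihk =>
    have h4 : 4 ≤ 2^(k+2) := by
      calc 4 = 2^2 := by norm_num
      _ ≤ 2^(k+2) := Nat.pow_le_pow_right (by norm_num) (by omega)
    have e : 2^(k+3) - 3 = 2*(2^(k+2)-3)+3 := by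
      have : 2^(k+3) = 2 * 2^(k+2) := by ring
      omega
    rw [e, (AB (2^(k+2)-3)).2, ihk]
    ring

/-- For every `t ≥ 2`: `(g_{2^{t-1}-2})² = g_{2^t-4}`. -/
theorem g_sq_eq (t : ℕ) (ht : 2 ≤ t) : (g (2 ^ (t - 1) - 2)) ^ 2 = g (2 ^ t - 4) := by
  obtain ⟨s, rfl⟩ : ∃ s, t = s + 2 := ⟨t - 2, by omega⟩
  cases s with
  | zero => simp [g]
  | succ k =>
    have h4 : 4 ≤ 2^(k+2) := by
      calc 4 = 2^2 := by norm_num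
      _ ≤ 2^(k+2) := Nat.pow_le_pow_right (by norm_num) (by omega)
    have e1 : (k+1+2) - 1 = k + 2 := by omega
    have e2 : 2^(k+3) - 4 = 2*(2^(k+2)-3)+2 := by
      have : 2^(k+3) = 2 * 2^(k+2) := by ring
      omega
    have e3 : (2^(k+2)-3) + 1 = 2^(k+2) - 2 := by omega
    rw [e1, e2, (AB (2^(k+2)-3)).1, e3, gC k]
    ring
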